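/- If G is a connected finite simple graph having no vertex-minor isomorphic to the path on 4 vertices (a path of length three), then G is isomorphic to a star or to a complete graph. -/

import Mathlib

/-!
Every connected graph on four vertices containing an induced path `x y z` is `P₄`, the paw,
the diamond or the square, and each of these reaches `P₄` by at most three local
complementations. Hence, without a `P₄` vertex-minor, an endpoint of an induced path `x y z`
has no neighbour besides `y`. If `G` is not complete, connectivity yields an induced path
`u p q`; applied to this path, and to an induced path from `p` to a non-neighbour of `p`,
the observation forces `p` to be adjacent to every vertex and every other vertex to be a leaf.
-/

open scoped Classical

namespace AvgCutRank

variable {V : Type*} {W : Type*}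

/-- Local complementation of `G` at a vertex `v`: complement the adjacency inside
the neighborhood of `v`. -/
def localComp (G : SimpleGraph V) (v : V) : SimpleGraph V where
  Adj x y := x ≠ y ∧ (G.Adj x y ↔ ¬(G.Adj v x ∧ G.Adj v y))
  symm := ⟨by
    rintro x y ⟨hxy, h⟩
    refine ⟨hxy.symm, ?_⟩
    rw [G.adj_comm y x, and_comm]
    exact h⟩
  loopless := ⟨fun x h => h.1 rfl⟩

/-- Two graphs on the same vertex set are locally equivalent if one is obtained from
the other by a sequence of local complementations. -/
def LocallyEquivalent (G H : SimpleGraph V) : Prop :=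
  Relation.ReflTransGen (fun A B => ∃ v, B = localComp A v) G H

/-- `H` is (isomorphic to) a vertex-minor of `G`: `H` is isomorphic to an induced
subgraph of a graph locally equivalent to `G`. -/
def IsVertexMinor (H : SimpleGraph W) (G : SimpleGraph V) : Prop :=
  ∃ (G' : SimpleGraph V) (s : Set V), LocallyEquivalent G G' ∧ Nonempty (H ≃g G'.induce s)

/-- The cut-rank of a set `X` of vertices: the rank over GF(2) of the `X × Xᶜ`
adjacency submatrix. -/
noncomputable def cutRank [Fintype V] [DecidableEq V] (G : SimpleGraph V)
    (X : Finset V) : ℕ :=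
  (Matrix.of fun (i : X) (j : (Xᶜ : Finset V)) =>
    if G.Adj i.1 j.1 then (1 : ZMod 2) else 0).rank

/-- The average cut-rank of a graph. -/
noncomputable def avgCutRank [Fintype V] [DecidableEq V] (G : SimpleGraph V) : ℝ :=
  (∑ X : Finset V, (cutRank G X : ℝ)) / 2 ^ Fintype.card V

/-- The maximum cut-rank of a graph. -/
noncomputable def maxCutRank [Fintype V] [DecidableEq V] (G : SimpleGraph V) : ℕ :=
  Finset.univ.sup (cutRank G)

/-- `x` and `y` are equal or twins: they have the same neighbors outside `{x, y}`. -/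
def TwinEq (G : SimpleGraph V) (x y : V) : Prop :=
  x = y ∨ ∀ z, z ≠ x → z ≠ y → (G.Adj x z ↔ G.Adj y z)

/-- `x` and `y` are twins. -/
def IsTwins (G : SimpleGraph V) (x y : V) : Prop :=
  x ≠ y ∧ ∀ z, z ≠ x → z ≠ y → (G.Adj x z ↔ G.Adj y z)

/-- Neighborhood diversity: the number of twin classes. -/
noncomputable def nd [Fintype V] [DecidableEq V] (G : SimpleGraph V) : ℕ :=
  (Finset.univ.image fun x => Finset.univ.filter fun y => TwinEq G x y).card

/-- The minimum rank of a graph over a field `F`. -/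
noncomputable def minRank (F : Type*) [Field F] [Fintype V] [DecidableEq V]
    (G : SimpleGraph V) : ℕ :=
  sInf { r : ℕ | ∃ A : Matrix V V F, A.IsSymm ∧
    (∀ i j, i ≠ j → (A i j ≠ 0 ↔ G.Adj i j)) ∧ A.rank = r }

/-- The clique delta-cover number: the minimum `t` such that the edge set of `G` is the
symmetric difference of the edge sets of `t` complete graphs (given by their vertex sets). -/
noncomputable def cliqueDeltaCover [Fintype V] [DecidableEq V] (G : SimpleGraph V) : ℕ :=
  sInf { t : ℕ | ∃ S : Fin t → Finset V, ∀ x y : V, x ≠ y →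
    (G.Adj x y ↔ Odd (Finset.univ.filter fun i => x ∈ S i ∧ y ∈ S i).card) }

/-- `C` is the vertex set of an attached star in `G`: the subgraph induced on `C` is a
star (with center `c`) all of whose noncentral vertices are leaves of `G`. -/
def IsAttachedStar (G : SimpleGraph V) (C : Set V) : Prop :=
  ∃ c ∈ C, (∃ x ∈ C, x ≠ c) ∧
    ∀ x ∈ C, x ≠ c → G.Adj c x ∧ ∀ y, G.Adj x y → y = c

/-- Deletion of a vertex: the induced subgraph on the complement of `{v}`. -/
def deleteVert (G : SimpleGraph V) (v : V) : SimpleGraph {w : V // w ≠ v} :=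
  SimpleGraph.comap Subtype.val G

/-- Deletion of a finite set of vertices. -/
def deleteVerts (G : SimpleGraph V) (T : Finset V) : SimpleGraph {w : V // w ∉ T} :=
  SimpleGraph.comap Subtype.val G

/-- The star `K_{1,m}` with center `0`. -/
def starGraph (m : ℕ) : SimpleGraph (Fin (m + 1)) :=
  SimpleGraph.fromRel fun x _ => x = 0

/-- The disjoint union of three copies of `K₂`. -/
def threeK2 : SimpleGraph (Fin 6) :=
  SimpleGraph.fromRel fun x y =>
    (x = 0 ∧ y = 1) ∨ (x = 2 ∧ y = 3) ∨ (x = 4 ∧ y = 5)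

/-- The disjoint union of two paths on three vertices. -/
def twoP3 : SimpleGraph (Fin 6) :=
  SimpleGraph.fromRel fun x y =>
    (x = 0 ∧ y = 1) ∨ (x = 1 ∧ y = 2) ∨ (x = 3 ∧ y = 4) ∨ (x = 4 ∧ y = 5)

/-- The disjoint union of `K₂` and the star `K_{1,k+1}`. -/
def K2PlusStar (k : ℕ) : SimpleGraph (Fin (k + 4)) :=
  SimpleGraph.fromRel fun x y => (x.val = 0 ∧ y.val = 1) ∨ (x.val = 2 ∧ 3 ≤ y.val)

/-- `E_k`: the star `K_{1,k+1}` with one edge subdivided. Vertex `0` is the center,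
`1` is the subdivision vertex, `2` is the leaf behind it, `3, …, k+2` are leaves. -/
def Egraph (k : ℕ) : SimpleGraph (Fin (k + 3)) :=
  SimpleGraph.fromRel fun x y =>
    (x.val = 0 ∧ y.val = 1) ∨ (x.val = 1 ∧ y.val = 2) ∨ (x.val = 0 ∧ 3 ≤ y.val)

/-- Finite graphs represented on the vertex sets `Fin n`. -/
abbrev GraphOn := Σ n : ℕ, SimpleGraph (Fin n)

/-- `H` is isomorphic to an induced subgraph of `G`. -/
def IsIndSubgraph (H G : GraphOn) : Prop :=
  ∃ s : Set (Fin G.1), Nonempty (H.2 ≃g G.2.induce s)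

/-- The sequence `x_n(ε)` from the paper. -/
noncomputable def xseq (ε : ℝ) : ℕ → ℤ
  | 0 => max ⌊2 - Real.logb 2 (1 - ε)⌋ 5
  | n + 1 => 2 ^ (8 * (n + 1) + 10) *
      ⌊(xseq ε n : ℝ) - Real.logb 2 (1 - Int.fract ((2 : ℝ) ^ (xseq ε n) * ε / 2)) + 1⌋

open SimpleGraph

namespace IsVertexMinor

variable {H : SimpleGraph W} {G : SimpleGraph V}

lemma of_embedding (f : H ↪g G) : IsVertexMinor H G :=
  ⟨G, Set.range f, Relation.ReflTransGen.refl, ⟨f.isoInduceRange⟩⟩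

lemma of_localComp (v : V) (h : IsVertexMinor H (localComp G v)) : IsVertexMinor H G := by
  obtain ⟨G', s, hequiv, hiso⟩ := h
  exact ⟨G', s, Relation.ReflTransGen.head ⟨v, rfl⟩ hequiv, hiso⟩

end IsVertexMinor

@[simp]
lemma localComp_adj {G : SimpleGraph V} {v x y : V} :
    (localComp G v).Adj x y ↔ x ≠ y ∧ (G.Adj x y ↔ ¬(G.Adj v x ∧ G.Adj v y)) :=
  Iff.rfl

section PathFour

variable {G : SimpleGraph V} {a b c d : V}

lemma isVertexMinor_pathGraph_four_of_induced (hab : G.Adj a b) (hbc : G.Adj b c)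
    (hcd : G.Adj c d) (hac : ¬ G.Adj a c) (had : ¬ G.Adj a d) (hbd : ¬ G.Adj b d)
    (ha_ne_c : a ≠ c) (ha_ne_d : a ≠ d) (hb_ne_d : b ≠ d) :
    IsVertexMinor (pathGraph 4) G := by
  refine IsVertexMinor.of_embedding ⟨⟨![a, b, c, d], fun i j hij => ?_⟩, fun {i j} => ?_⟩
  · fin_cases i <;> fin_cases j <;>
      simp_all [hab.ne, hbc.ne, hcd.ne, hab.ne.symm, hbc.ne.symm, hcd.ne.symm, Ne.symm]
  · change G.Adj (![a, b, c, d] i) (![a, b, c, d] j) ↔ _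
    fin_cases i <;> fin_cases j <;>
      simp [pathGraph_adj, hab, hbc, hcd, hab.symm, hbc.symm, hcd.symm, hac, had,
        hbd, G.adj_comm _ a, G.adj_comm d b]

/-- Complementing at `d` deletes the edge `b c`, leaving the path `a b d c`. -/
lemma isVertexMinor_pathGraph_four_of_paw (hab : G.Adj a b) (hbc : G.Adj b c)
    (hbd : G.Adj b d) (hcd : G.Adj c d) (hac : ¬ G.Adj a c) (had : ¬ G.Adj a d)
    (ha_ne_c : a ≠ c) (ha_ne_d : a ≠ d) :
    IsVertexMinor (pathGraph 4) G := by
  refine IsVertexMinor.of_localComp d (isVertexMinor_pathGraph_four_of_induced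
    (b := b) (c := d) (d := c) ?_ ?_ ?_ ?_ ?_ ?_ ha_ne_d ha_ne_c hbc.ne) <;>
  simp only [localComp_adj] <;> grind [adj_comm, SimpleGraph.irrefl, Adj.ne]

/-- Complementing at `b` turns the diamond into a paw. -/
lemma isVertexMinor_pathGraph_four_of_diamond (hab : G.Adj a b) (hbc : G.Adj b c)
    (hcd : G.Adj c d) (had : G.Adj a d) (hbd : G.Adj b d) (hac : ¬ G.Adj a c)
    (ha_ne_c : a ≠ c) :
    IsVertexMinor (pathGraph 4) G := by
  refine IsVertexMinor.of_localComp b (isVertexMinor_pathGraph_four_of_paw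
    (a := d) (b := b) (c := a) (d := c) ?_ ?_ ?_ ?_ ?_ ?_ had.ne.symm hcd.ne.symm) <;>
  simp only [localComp_adj] <;> grind [adj_comm, SimpleGraph.irrefl, Adj.ne]

/-- Complementing at `a` adds the chord `b d`, giving a diamond. -/
lemma isVertexMinor_pathGraph_four_of_cycle (hab : G.Adj a b) (hbc : G.Adj b c)
    (hcd : G.Adj c d) (hda : G.Adj d a) (hac : ¬ G.Adj a c) (hbd : ¬ G.Adj b d)
    (ha_ne_c : a ≠ c) (hb_ne_d : b ≠ d) :
    IsVertexMinor (pathGraph 4) G := by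
  refine IsVertexMinor.of_localComp a
    (isVertexMinor_pathGraph_four_of_diamond (b := b) (d := d) ?_ ?_ ?_ ?_ ?_ ?_ ha_ne_c) <;>
  simp only [localComp_adj] <;> grind [adj_comm, SimpleGraph.irrefl, Adj.ne]

end PathFour

section Star

variable {G : SimpleGraph V}

lemma exists_induced_path_three_of_not_adj {u v : V} (h : G.Reachable u v) (hne : u ≠ v)
    (hnadj : ¬ G.Adj u v) : ∃ p q, G.Adj u p ∧ G.Adj p q ∧ ¬ G.Adj u q ∧ u ≠ q := by
  obtain ⟨W⟩ := h
  obtain ⟨d, -, hfst, hsnd⟩ := W.exists_boundary_dart {w | w = u ∨ G.Adj u w} (Or.inl rfl)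
    (by simp [hne.symm, hnadj])
  simp only [Set.mem_ofPred_eq, not_or] at hfst hsnd
  rcases hfst with hfst | hfst
  · exact absurd (hfst ▸ d.adj) hsnd.2
  · exact ⟨d.fst, d.snd, hfst, d.adj, hsnd.2, Ne.symm hsnd.1⟩

lemma eq_of_adj_endpoint_of_not_isVertexMinor (hG : ¬ IsVertexMinor (pathGraph 4) G)
    {w x y z : V} (hxy : G.Adj x y) (hyz : G.Adj y z) (hxz : ¬ G.Adj x z) (hx_ne_z : x ≠ z)
    (hwx : G.Adj w x) : w = y := by
  by_contra hw_ne_y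
  have hw_ne_z : w ≠ z := by rintro rfl; exact hxz hwx.symm
  have hzx : ¬ G.Adj z x := fun h => hxz h.symm
  apply hG
  by_cases hwy : G.Adj w y <;> by_cases hwz : G.Adj w z
  · exact isVertexMinor_pathGraph_four_of_diamond hxy hyz hwz.symm hwx.symm hwy.symm hxz hx_ne_z
  · exact isVertexMinor_pathGraph_four_of_paw hyz.symm hxy.symm hwy.symm hwx.symm hzx
      (fun h => hwz h.symm) hx_ne_z.symm hw_ne_z.symm
  · exact isVertexMinor_pathGraph_four_of_cycle hxy hyz hwz.symm hwx hxz
      (fun h => hwy h.symm) hx_ne_z (Ne.symm hw_ne_y)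
  · exact isVertexMinor_pathGraph_four_of_induced hwx hxy hyz hwy hwz hxz
      hw_ne_y hw_ne_z hx_ne_z

end Star

theorem stmt19_general {V : Type} (G : SimpleGraph V)
    (hconn : G.Connected) (hpm : ¬ IsVertexMinor (SimpleGraph.pathGraph 4) G) :
    (∃ c : V, ∀ x y : V, G.Adj x y ↔ (x = c ∨ y = c) ∧ x ≠ y) ∨
    (∀ x y : V, x ≠ y → G.Adj x y) := by
  refine or_iff_not_imp_right.2 fun hcomplete => ?_
  obtain ⟨u, v, hne, hnadj⟩ : ∃ u v, u ≠ v ∧ ¬ G.Adj u v := by simpa using hcomplete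
  obtain ⟨p, q, hup, hpq, huq, hu_ne_q⟩ :=
    exists_induced_path_three_of_not_adj (hconn.preconnected u v) hne hnadj
  have hcenter : ∀ x, x ≠ p → G.Adj p x := by
    by_contra! ⟨f, hf_ne_p, hpf⟩
    obtain ⟨r, s, hpr, hrs, hps, hp_ne_s⟩ :=
      exists_induced_path_three_of_not_adj (hconn.preconnected p f) hf_ne_p.symm hpf
    exact hu_ne_q <| (eq_of_adj_endpoint_of_not_isVertexMinor hpm hpr hrs hps hp_ne_s hup).trans
      (eq_of_adj_endpoint_of_not_isVertexMinor hpm hpr hrs hps hp_ne_s hpq.symm).symm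
  have hleaf : ∀ x, x ≠ p → ∀ y, G.Adj x y → y = p := by
    intro x hx_ne_p y hxy
    rcases eq_or_ne x u with rfl | hx_ne_u
    · exact eq_of_adj_endpoint_of_not_isVertexMinor hpm hup hpq huq hu_ne_q hxy.symm
    have hxu : ¬ G.Adj x u := fun h =>
      hx_ne_p (eq_of_adj_endpoint_of_not_isVertexMinor hpm hup hpq huq hu_ne_q h)
    exact eq_of_adj_endpoint_of_not_isVertexMinor hpm (hcenter x hx_ne_p).symm hup.symm hxu
      hx_ne_u hxy.symm
  refine ⟨p, fun x y => ⟨fun hxy => ⟨?_, hxy.ne⟩, ?_⟩⟩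
  · exact or_iff_not_imp_left.2 fun hx_ne_p => hleaf x hx_ne_p y hxy
  · rintro ⟨rfl | rfl, hne⟩
    · exact hcenter y hne.symm
    · exact (hcenter x hne).symm

/-- A connected graph with no vertex-minor isomorphic to the path
on four vertices is a star or a complete graph. -/
theorem stmt19 {V : Type} [Fintype V] [DecidableEq V] (G : SimpleGraph V)
    (hconn : G.Connected) (hpm : ¬ IsVertexMinor (SimpleGraph.pathGraph 4) G) :
    (∃ c : V, ∀ x y : V, G.Adj x y ↔ (x = c ∨ y = c) ∧ x ≠ y) ∨
    (∀ x y : V, x ≠ y → G.Adj x y) :=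
  stmt19_general G hconn hpm

end AvgCutRank
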